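/- arXiv:2112.14367 — 6 statements merged into one kernel-verified Lean document; each statement's English description precedes it below -/
import Mathlib

section
/- For n ≥ 1 define the polyanalytic Fock kernel of order n by K_n(z,w) = exp(z·conj(w)) · Σ_{k=0}^{n−1} ((−1)^k / k!) · (n choose (k+1)) · |z−w|^{2k}. Then for all z, w ∈ ℂ the series Σ_{n=1}^{∞} K_n(z,w) / 2^{n+1} converges and equals G(z,w)·K(z,w), where G(z,w) = exp(z·conj(w) − |z|² − |w|²) and K(z,w) = exp(z·conj(w) + conj(z)·w). -/
/-!
Writing `u = -|z - w|²`, the kernel is `K_n(z,w) = e^{z w̄} Σ_{k<n} C(n,k+1) u^k / k!`. Summing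
against the weights `2^{-(n+1)}` and exchanging the order of summation (the double series converges
absolutely), each `u^k / k!` is multiplied by `Σ_{n>k} C(n,k+1) 2^{-(n+1)} = 1`, so the series sums
to `e^{z w̄} e^{-|z-w|²}`, which expands to `G(z,w) K(z,w)`.
-/

open Complex ComplexConjugate

/-- The reproducing kernel of the polyanalytic Fock space of order `n ≥ 1`:
`K_n(z,w) = exp(z·conj w) · Σ_{k=0}^{n−1} ((−1)^k/k!) · C(n,k+1) · |z−w|^{2k}`. -/
noncomputable def polyFockKernel (n : ℕ) (z w : ℂ) : ℂ :=
  Complex.exp (z * conj w) *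
    ∑ k ∈ Finset.range n,
      ((-1 : ℂ) ^ k / (k.factorial : ℂ)) * (n.choose (k + 1) : ℂ) *
        ((‖z - w‖ : ℂ)) ^ (2 * k)

open Finset

lemma hasSum_choose_div_two_pow (k : ℕ) :
    HasSum (fun n : ℕ => ((n + 1).choose (k + 1) : ℝ) / 2 ^ (n + 2)) 1 := by
  have hgeom := (hasSum_choose_mul_geometric_of_norm_lt_one (k + 1)
    (r := (2⁻¹ : ℝ)) (by norm_num)).div_const (2 ^ (k + 2))
  rw [show (1 : ℝ) - 2⁻¹ = 2⁻¹ by norm_num, inv_pow, one_div, inv_inv,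
    div_self (by positivity)] at hgeom
  rw [← hasSum_nat_add_iff' k]
  have hvanish : ∑ n ∈ range k, ((n + 1).choose (k + 1) : ℝ) / 2 ^ (n + 2) = 0 :=
    sum_eq_zero fun n hn => by rw [Nat.choose_eq_zero_of_lt (by simp at hn; omega)]; simp
  rw [hvanish, sub_zero]
  refine hgeom.congr_fun fun n => ?_
  rw [show n + k + 1 = n + (k + 1) by omega, show n + k + 2 = n + (k + 2) by omega, pow_add,
    inv_pow]
  field_simp

variable {E : Type*} [NormedAddCommGroup E] [NormedSpace ℝ E] [CompleteSpace E]

theorem HasSum.sum_range_choose_smul_div_two_pow {a : ℕ → E} {s : E} (ha : HasSum a s)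
    (habs : Summable fun k => ‖a k‖) :
    HasSum (fun n : ℕ => ∑ k ∈ range (n + 1), (((n + 1).choose (k + 1) : ℝ) / 2 ^ (n + 2)) • a k)
      s := by
  set f : ℕ × ℕ → E := fun p => (((p.2 + 1).choose (p.1 + 1) : ℝ) / 2 ^ (p.2 + 2)) • a p.1
  have hfiber : ∀ k, HasSum (fun n => f (k, n)) (a k) := fun k => by
    simpa using (hasSum_choose_div_two_pow k).smul_const (a k)
  have hnorm_fiber : ∀ k, HasSum (fun n => ‖f (k, n)‖) ‖a k‖ := fun k => by
    simpa [f, norm_smul, abs_of_nonneg, div_nonneg] using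
      (hasSum_choose_div_two_pow k).mul_right ‖a k‖
  have hf : Summable f := Summable.of_norm <|
    (summable_prod_of_nonneg fun _ => norm_nonneg _).2
      ⟨fun k => (hnorm_fiber k).summable, by simpa [(hnorm_fiber _).tsum_eq] using habs⟩
  have hfs : HasSum f s := by
    rw [ha.unique (hf.hasSum.prod_fiberwise hfiber)]
    exact hf.hasSum
  refine ((Equiv.prodComm ℕ ℕ).hasSum_iff.2 hfs).prod_fiberwise fun n => ?_
  refine hasSum_sum_of_ne_finset_zero fun k hk => ?_
  simp only [mem_range, not_lt] at hk
  simp [f, Nat.choose_eq_zero_of_lt (show n + 1 < k + 1 by omega)]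

lemma polyFockKernel_eq (n : ℕ) (z w : ℂ) :
    polyFockKernel n z w = Complex.exp (z * conj w) *
      ∑ k ∈ range n, (n.choose (k + 1) : ℂ) * ((-(‖z - w‖ : ℂ) ^ 2) ^ k / k.factorial) := by
  unfold polyFockKernel
  congr 1
  refine sum_congr rfl fun k _ => ?_
  rw [neg_pow, pow_mul]
  ring

lemma exp_mul_conj_mul_exp_neg_norm_sub_sq (z w : ℂ) :
    Complex.exp (z * conj w) * Complex.exp (-(‖z - w‖ : ℂ) ^ 2) =
      Complex.exp (z * conj w - (‖z‖ : ℂ) ^ 2 - (‖w‖ : ℂ) ^ 2) *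
        Complex.exp (z * conj w + conj z * w) := by
  rw [← Complex.exp_add, ← Complex.exp_add, ← mul_conj', ← mul_conj', ← mul_conj', map_sub]
  congr 1
  ring

/-- For all `z, w ∈ ℂ` the series `Σ_{n=1}^∞ K_n(z,w)/2^{n+1}` converges and its sum
is `G(z,w)·K(z,w)`, where `G(z,w) = exp(z·conj w − |z|² − |w|²)` and
`K(z,w) = exp(z·conj w + conj z·w)`. -/
theorem hasSum_polyFockKernel_div_two_pow (z w : ℂ) :
    HasSum (fun n : ℕ => polyFockKernel (n + 1) z w / 2 ^ (n + 2))
      (Complex.exp (z * conj w - (‖z‖ : ℂ) ^ 2 - (‖w‖ : ℂ) ^ 2) *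
        Complex.exp (z * conj w + conj z * w)) := by
  set u : ℂ := -(‖z - w‖ : ℂ) ^ 2
  have hexp : HasSum (fun k => u ^ k / k.factorial) (Complex.exp u) := by
    simpa [Complex.exp_eq_exp_ℂ] using NormedSpace.expSeries_div_hasSum_exp u
  rw [← exp_mul_conj_mul_exp_neg_norm_sub_sq]
  refine ((hexp.sum_range_choose_smul_div_two_pow
    (NormedSpace.norm_expSeries_div_summable u)).mul_left (Complex.exp (z * conj w))).congr_fun
    fun n => ?_
  rw [polyFockKernel_eq, mul_div_assoc, sum_div]
  congr 1
  refine sum_congr rfl fun k _ => ?_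
  rw [Complex.real_smul]
  push_cast
  ring
end

section
/- Let β > 2 and let f : ℂ → ℂ be square integrable with respect to the Gaussian measure dμ(w) = (1/π) exp(−|w|²) dA(w). Then (1/π) ∫_ℂ |B(f)(z)|² · exp(−β|z|²) dA(z) ≤ (1/(β−2)) · ‖f‖²_{L²(ℂ,dμ)}, where B(f)(z) = (1/π) ∫_ℂ exp(−|z−w|²) f(w) dA(w) is the Berezin transform of f. In particular B is a bounded operator from L²(ℂ,dμ) into the weighted Gaussian L² space of parameter β. -/
open Complex MeasureTheory

/-- The Gaussian measure `dμ(w) = (1/π)·exp(−|w|²) dA(w)` on `ℂ`. -/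
noncomputable def gaussianMeasure : Measure ℂ :=
  volume.withDensity fun w => ENNReal.ofReal (Real.exp (-‖w‖ ^ 2) / Real.pi)

/-- The Berezin transform `B(f)(z) = (1/π)∫_ℂ exp(−|z−w|²) f(w) dA(w)`. -/
noncomputable def berezin (f : ℂ → ℂ) (z : ℂ) : ℂ :=
  (1 / (Real.pi : ℂ)) * ∫ w : ℂ, Complex.exp (-((‖z - w‖ : ℂ) ^ 2)) * f w

/-!
Schur test with Gaussian weights. Applying Cauchy–Schwarz to
`∫ exp(-|z-w|²) f(w) dw` against the weight `exp(s|w|²)`, `s = u/(1+u)`, the first factor is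
the Gaussian integral `π(1+u) exp(u|z|²)`. After multiplying by `exp(-β|z|²)` and integrating
in `z` (Tonelli), a second Gaussian integral leaves the weight `exp(-|w|²)` of `dμ` as soon as
`u(β-u) ≥ 1`, with constant `(1+u)/(1+β-u)`; `u = 2/β` gives `1/(β-1) ≤ 1/(β-2)`.
Everything is estimated with `ℝ≥0∞`-valued integrals, so integrability only enters at the end.
-/

open scoped ENNReal

noncomputable def ennrealExp (x : ℝ) : ℝ≥0∞ := ENNReal.ofReal (Real.exp x)

lemma ennrealExp_add (x y : ℝ) : ennrealExp (x + y) = ennrealExp x * ennrealExp y := by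
  rw [ennrealExp, Real.exp_add, ENNReal.ofReal_mul (Real.exp_pos x).le]
  rfl

lemma ennrealExp_half_sq (x : ℝ) : ennrealExp (x / 2) ^ 2 = ennrealExp x := by
  rw [sq, ← ennrealExp_add, add_halves]

lemma ennrealExp_ne_top (x : ℝ) : ennrealExp x ≠ ∞ := ENNReal.ofReal_ne_top

lemma ennrealExp_le_ennrealExp {x y : ℝ} (h : x ≤ y) : ennrealExp x ≤ ennrealExp y :=
  ENNReal.ofReal_le_ofReal (Real.exp_le_exp.2 h)

@[fun_prop]
lemma measurable_ennrealExp : Measurable ennrealExp :=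
  ENNReal.measurable_ofReal.comp Real.measurable_exp

lemma sq_lintegral_mul_le {α : Type*} [MeasurableSpace α] {μ : Measure α} {f g : α → ℝ≥0∞}
    (hf : AEMeasurable f μ) (hg : AEMeasurable g μ) :
    (∫⁻ a, f a * g a ∂μ) ^ 2 ≤ (∫⁻ a, f a ^ 2 ∂μ) * ∫⁻ a, g a ^ 2 ∂μ := by
  have holder := ENNReal.lintegral_mul_le_Lp_mul_Lq μ Real.HolderConjugate.two_two hf hg
  simp only [Pi.mul_apply, ENNReal.rpow_two] at holder
  calc (∫⁻ a, f a * g a ∂μ) ^ 2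
      ≤ ((∫⁻ a, f a ^ 2 ∂μ) ^ (1 / 2 : ℝ) * (∫⁻ a, g a ^ 2 ∂μ) ^ (1 / 2 : ℝ)) ^ 2 := by
        gcongr
    _ = (∫⁻ a, f a ^ 2 ∂μ) * ∫⁻ a, g a ^ 2 ∂μ := by
        simp only [mul_pow, ← ENNReal.rpow_natCast, ← ENNReal.rpow_mul]
        norm_num

lemma sq_lintegral_ennrealExp_mul_le {α : Type*} [MeasurableSpace α] {μ : Measure α}
    {φ ψ : α → ℝ} (hφ : Measurable φ) (hψ : Measurable ψ) {N : α → ℝ≥0∞}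
    (hN : AEMeasurable N μ) :
    (∫⁻ a, ennrealExp (φ a) * N a ∂μ) ^ 2
      ≤ (∫⁻ a, ennrealExp (φ a + ψ a) ∂μ) * ∫⁻ a, ennrealExp (φ a - ψ a) * N a ^ 2 ∂μ := by
  have hsplit : ∀ a, ennrealExp (φ a) * N a
      = ennrealExp ((φ a + ψ a) / 2) * (ennrealExp ((φ a - ψ a) / 2) * N a) := by
    intro a
    rw [← mul_assoc, ← ennrealExp_add]
    ring_nf
  simp_rw [hsplit]
  refine (sq_lintegral_mul_le (by fun_prop)
    ((by fun_prop : Measurable _).aemeasurable.mul hN)).trans_eq ?_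
  simp only [Pi.mul_apply, mul_pow, ennrealExp_half_sq]

lemma integral_exp_neg_mul_norm_sq {a : ℝ} (ha : 0 < a) :
    ∫ z : ℂ, Real.exp (-a * ‖z‖ ^ 2) = Real.pi / a := by
  rw [GaussianFourier.integral_rexp_neg_mul_sq_norm ha, finrank_real_complex]
  norm_num

lemma lintegral_ennrealExp_neg_mul_norm_sub_sq {a : ℝ} (ha : 0 < a) (c : ℂ) :
    ∫⁻ z, ennrealExp (-a * ‖z - c‖ ^ 2) = ENNReal.ofReal (Real.pi / a) := by
  have hint : Integrable fun z : ℂ => Real.exp (-a * ‖z‖ ^ 2) :=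
    .of_integral_ne_zero (by rw [integral_exp_neg_mul_norm_sq ha]; positivity)
  rw [lintegral_sub_right_eq_self (fun z => ennrealExp (-a * ‖z‖ ^ 2)) c,
    ← integral_exp_neg_mul_norm_sq ha,
    ofReal_integral_eq_lintegral_ofReal hint (.of_forall fun z => (Real.exp_pos _).le)]
  rfl

lemma norm_sub_sq_add_mul_norm_sq {E : Type*} [NormedAddCommGroup E] [InnerProductSpace ℝ E]
    {b : ℝ} (hb : 1 + b ≠ 0) (z w : E) :
    ‖z - w‖ ^ 2 + b * ‖w‖ ^ 2
      = (1 + b) * ‖w - (1 + b)⁻¹ • z‖ ^ 2 + b / (1 + b) * ‖z‖ ^ 2 := by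
  rw [norm_sub_sq_real, norm_sub_sq_real, inner_smul_right, norm_smul, mul_pow, real_inner_comm,
    Real.norm_eq_abs, sq_abs]
  field_simp
  ring

lemma lintegral_ennrealExp_neg_norm_sub_sq_sub_mul_norm_sq {b : ℝ} (hb : 0 < 1 + b) (z : ℂ) :
    ∫⁻ w, ennrealExp (-‖z - w‖ ^ 2 - b * ‖w‖ ^ 2)
      = ENNReal.ofReal (Real.pi / (1 + b)) * ennrealExp (-(b / (1 + b)) * ‖z‖ ^ 2) := by
  have hsq : ∀ w : ℂ, -‖z - w‖ ^ 2 - b * ‖w‖ ^ 2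
      = -(1 + b) * ‖w - (1 + b)⁻¹ • z‖ ^ 2 + -(b / (1 + b)) * ‖z‖ ^ 2 := by
    intro w
    linear_combination -(norm_sub_sq_add_mul_norm_sq hb.ne' z w)
  simp_rw [hsq, ennrealExp_add]
  rw [lintegral_mul_const' _ _ (ennrealExp_ne_top _),
    lintegral_ennrealExp_neg_mul_norm_sub_sq (by linarith)]

lemma enorm_cexp_neg_norm_sq (z : ℂ) : ‖cexp (-((‖z‖ : ℂ) ^ 2))‖ₑ = ennrealExp (-‖z‖ ^ 2) := by
  rw [← ofReal_norm, Complex.norm_exp]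
  norm_cast

lemma enorm_berezin_le (f : ℂ → ℂ) (z : ℂ) :
    ‖berezin f z‖ₑ ≤ ENNReal.ofReal Real.pi⁻¹ * ∫⁻ w, ennrealExp (-‖z - w‖ ^ 2) * ‖f w‖ₑ := by
  have hπ : ‖1 / (Real.pi : ℂ)‖ₑ = ENNReal.ofReal Real.pi⁻¹ := by
    rw [one_div, ← ofReal_inv, ← ofReal_norm, Complex.norm_real,
      Real.norm_of_nonneg (by positivity)]
  rw [berezin, enorm_mul, hπ]
  gcongr
  refine (enorm_integral_le_lintegral_enorm _).trans_eq (lintegral_congr fun w => ?_)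
  rw [enorm_mul, enorm_cexp_neg_norm_sq]

lemma enorm_berezin_sq_le {f : ℂ → ℂ} (hf : AEMeasurable fun w => ‖f w‖ₑ) {u : ℝ}
    (hu : 0 < 1 + u) (z : ℂ) :
    ‖berezin f z‖ₑ ^ 2 ≤ ENNReal.ofReal ((1 + u) / Real.pi) * ennrealExp (u * ‖z‖ ^ 2)
      * ∫⁻ w, ennrealExp (-‖z - w‖ ^ 2 - u / (1 + u) * ‖w‖ ^ 2) * ‖f w‖ₑ ^ 2 := by
  have hb : 1 + -(u / (1 + u)) = (1 + u)⁻¹ := by field_simp; ring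
  have hweight : ∫⁻ w, ennrealExp (-‖z - w‖ ^ 2 + u / (1 + u) * ‖w‖ ^ 2)
      = ENNReal.ofReal (Real.pi * (1 + u)) * ennrealExp (u * ‖z‖ ^ 2) := by
    have := lintegral_ennrealExp_neg_norm_sub_sq_sub_mul_norm_sq (b := -(u / (1 + u)))
      (by rw [hb]; positivity) z
    rw [hb, div_inv_eq_mul, neg_div, neg_neg, div_inv_eq_mul, div_mul_cancel₀ _ hu.ne'] at this
    simpa only [neg_mul, sub_neg_eq_add] using this
  calc ‖berezin f z‖ₑ ^ 2
      ≤ ENNReal.ofReal Real.pi⁻¹ ^ 2 * (∫⁻ w, ennrealExp (-‖z - w‖ ^ 2) * ‖f w‖ₑ) ^ 2 := by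
        rw [← mul_pow]
        gcongr
        exact enorm_berezin_le f z
    _ ≤ ENNReal.ofReal Real.pi⁻¹ ^ 2 * ((∫⁻ w, ennrealExp (-‖z - w‖ ^ 2 + u / (1 + u) * ‖w‖ ^ 2))
          * ∫⁻ w, ennrealExp (-‖z - w‖ ^ 2 - u / (1 + u) * ‖w‖ ^ 2) * ‖f w‖ₑ ^ 2) := by
        gcongr
        exact sq_lintegral_ennrealExp_mul_le (by fun_prop) (by fun_prop) hf
    _ = _ := by
        rw [hweight, ← mul_assoc, ← mul_assoc, ← ENNReal.ofReal_pow (by positivity),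
          ← ENNReal.ofReal_mul (by positivity)]
        congr 3
        field_simp

lemma lintegral_ennrealExp_mul_lintegral {c : ℝ} (hc : 0 < 1 + c) (s : ℝ) {G : ℂ → ℝ≥0∞}
    (hG : AEMeasurable G) :
    ∫⁻ z, ennrealExp (-c * ‖z‖ ^ 2) * ∫⁻ w, ennrealExp (-‖z - w‖ ^ 2 - s * ‖w‖ ^ 2) * G w
      = ENNReal.ofReal (Real.pi / (1 + c))
        * ∫⁻ w, ennrealExp (-(s + c / (1 + c)) * ‖w‖ ^ 2) * G w := by
  have hexp : ∀ z w : ℂ, ennrealExp (-c * ‖z‖ ^ 2) * ennrealExp (-‖z - w‖ ^ 2 - s * ‖w‖ ^ 2)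
      = ennrealExp (-s * ‖w‖ ^ 2) * ennrealExp (-‖w - z‖ ^ 2 - c * ‖z‖ ^ 2) := by
    intro z w
    rw [← ennrealExp_add, ← ennrealExp_add, norm_sub_rev]
    ring_nf
  have hmeas : AEMeasurable (Function.uncurry fun z w : ℂ =>
      ennrealExp (-c * ‖z‖ ^ 2) * (ennrealExp (-‖z - w‖ ^ 2 - s * ‖w‖ ^ 2) * G w))
      (volume.prod volume) :=
    (by fun_prop : Measurable fun p : ℂ × ℂ =>
      ennrealExp (-c * ‖p.1‖ ^ 2) * ennrealExp (-‖p.1 - p.2‖ ^ 2 - s * ‖p.2‖ ^ 2)).aemeasurable.mul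
      hG.comp_snd |>.congr (.of_forall fun _ => mul_assoc _ _ _)
  calc ∫⁻ z, ennrealExp (-c * ‖z‖ ^ 2) * ∫⁻ w, ennrealExp (-‖z - w‖ ^ 2 - s * ‖w‖ ^ 2) * G w
      = ∫⁻ w, ∫⁻ z, ennrealExp (-c * ‖z‖ ^ 2)
          * (ennrealExp (-‖z - w‖ ^ 2 - s * ‖w‖ ^ 2) * G w) := by
        simp_rw [← lintegral_const_mul' _ _ (ennrealExp_ne_top _)]
        exact lintegral_lintegral_swap hmeas
    _ = ∫⁻ w, ENNReal.ofReal (Real.pi / (1 + c))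
          * (ennrealExp (-(s + c / (1 + c)) * ‖w‖ ^ 2) * G w) := by
        refine lintegral_congr fun w => ?_
        simp_rw [← mul_assoc, hexp, mul_comm (ennrealExp (-s * ‖w‖ ^ 2)), mul_assoc]
        rw [lintegral_mul_const _ (by fun_prop),
          lintegral_ennrealExp_neg_norm_sub_sq_sub_mul_norm_sq hc, ← mul_assoc,
          mul_assoc (ENNReal.ofReal _), ← ennrealExp_add]
        ring_nf
    _ = _ := lintegral_const_mul' _ _ ENNReal.ofReal_ne_top

theorem lintegral_enorm_berezin_sq_mul_le {f : ℂ → ℂ} (hf : AEMeasurable fun w => ‖f w‖ₑ)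
    {β u : ℝ} (hu : 0 < u) (huβ : 1 ≤ u * (β - u)) :
    ∫⁻ z, ‖berezin f z‖ₑ ^ 2 * ennrealExp (-β * ‖z‖ ^ 2)
      ≤ ENNReal.ofReal ((1 + u) / (1 + (β - u)))
        * ∫⁻ w, ennrealExp (-‖w‖ ^ 2) * ‖f w‖ₑ ^ 2 := by
  have hc : 0 < 1 + (β - u) := by nlinarith
  have hexp : 1 ≤ u / (1 + u) + (β - u) / (1 + (β - u)) := by
    rw [div_add_div _ _ (by positivity) hc.ne', le_div_iff₀ (by positivity)]
    nlinarith
  calc ∫⁻ z, ‖berezin f z‖ₑ ^ 2 * ennrealExp (-β * ‖z‖ ^ 2)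
      ≤ ∫⁻ z, ENNReal.ofReal ((1 + u) / Real.pi) * (ennrealExp (-(β - u) * ‖z‖ ^ 2)
          * ∫⁻ w, ennrealExp (-‖z - w‖ ^ 2 - u / (1 + u) * ‖w‖ ^ 2) * ‖f w‖ₑ ^ 2) := by
        refine lintegral_mono fun z => ?_
        have hz : ennrealExp (u * ‖z‖ ^ 2) * ennrealExp (-β * ‖z‖ ^ 2)
            = ennrealExp (-(β - u) * ‖z‖ ^ 2) := by
          rw [← ennrealExp_add]
          ring_nf
        refine (mul_le_mul_left (enorm_berezin_sq_le hf (u := u) (by linarith) z) _).trans_eq ?_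
        rw [← hz]
        ring
    _ = ENNReal.ofReal ((1 + u) / Real.pi) * (ENNReal.ofReal (Real.pi / (1 + (β - u)))
          * ∫⁻ w, ennrealExp (-(u / (1 + u) + (β - u) / (1 + (β - u))) * ‖w‖ ^ 2)
            * ‖f w‖ₑ ^ 2) := by
        rw [lintegral_const_mul' _ _ ENNReal.ofReal_ne_top,
          lintegral_ennrealExp_mul_lintegral hc _ (hf.pow_const 2)]
    _ ≤ ENNReal.ofReal ((1 + u) / Real.pi) * (ENNReal.ofReal (Real.pi / (1 + (β - u)))
          * ∫⁻ w, ennrealExp (-‖w‖ ^ 2) * ‖f w‖ₑ ^ 2) := by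
        gcongr with w
        exact ennrealExp_le_ennrealExp (by nlinarith [sq_nonneg ‖w‖])
    _ = _ := by
        rw [← mul_assoc, ← ENNReal.ofReal_mul (by positivity)]
        congr 2
        field_simp

lemma volume_absolutelyContinuous_gaussianMeasure : (volume : Measure ℂ) ≪ gaussianMeasure :=
  withDensity_absolutelyContinuous' (by fun_prop) (.of_forall fun _ => by positivity)

lemma lintegral_ennrealExp_neg_norm_sq_mul (g : ℂ → ℝ≥0∞) :
    ∫⁻ w, ennrealExp (-‖w‖ ^ 2) * g w = ENNReal.ofReal Real.pi * ∫⁻ w, g w ∂gaussianMeasure := by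
  rw [gaussianMeasure, lintegral_withDensity_eq_lintegral_mul_non_measurable _ (by fun_prop)
    (.of_forall fun _ => ENNReal.ofReal_lt_top), ← lintegral_const_mul' _ _ ENNReal.ofReal_ne_top]
  refine lintegral_congr fun w => ?_
  rw [Pi.mul_apply, ← mul_assoc, ← ENNReal.ofReal_mul Real.pi_pos.le,
    mul_div_cancel₀ _ Real.pi_ne_zero]
  rfl

lemma integral_le_toReal_lintegral_enorm {α : Type*} [MeasurableSpace α] {μ : Measure α}
    (g : α → ℝ) : ∫ a, g a ∂μ ≤ (∫⁻ a, ‖g a‖ₑ ∂μ).toReal := by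
  simpa only [ofReal_norm] using (Real.le_norm_self _).trans (norm_integral_le_lintegral_norm g)

lemma lintegral_ennrealExp_neg_norm_sq_mul_enorm_sq {f : ℂ → ℂ} (hf : MemLp f 2 gaussianMeasure) :
    ∫⁻ w, ennrealExp (-‖w‖ ^ 2) * ‖f w‖ₑ ^ 2
      = ENNReal.ofReal (Real.pi * ∫ w, ‖f w‖ ^ 2 ∂gaussianMeasure) := by
  rw [lintegral_ennrealExp_neg_norm_sq_mul, ENNReal.ofReal_mul Real.pi_pos.le,
    ofReal_integral_eq_lintegral_ofReal ((memLp_two_iff_integrable_sq_norm hf.1).1 hf)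
      (.of_forall fun _ => by positivity)]
  simp only [ENNReal.ofReal_pow (norm_nonneg _), ofReal_norm]

theorem integral_norm_berezin_sq_mul_exp_le {f : ℂ → ℂ} (hf : MemLp f 2 gaussianMeasure)
    {β u : ℝ} (hu : 0 < u) (huβ : 1 ≤ u * (β - u)) :
    ∫ z : ℂ, ‖berezin f z‖ ^ 2 * Real.exp (-β * ‖z‖ ^ 2)
      ≤ (1 + u) / (1 + (β - u)) * (Real.pi * ∫ w, ‖f w‖ ^ 2 ∂gaussianMeasure) := by
  have hc : 0 < 1 + (β - u) := by nlinarith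
  have hI : 0 ≤ ∫ w, ‖f w‖ ^ 2 ∂gaussianMeasure := integral_nonneg fun _ => by positivity
  have hschur := lintegral_enorm_berezin_sq_mul_le
    (hf.1.enorm.mono_ac volume_absolutelyContinuous_gaussianMeasure) hu huβ
  rw [lintegral_ennrealExp_neg_norm_sq_mul_enorm_sq hf, ← ENNReal.ofReal_mul (by positivity)]
    at hschur
  refine (integral_le_toReal_lintegral_enorm _).trans (ENNReal.toReal_le_of_le_ofReal
    (by positivity) (le_of_eq_of_le (lintegral_congr fun z => ?_) hschur))
  rw [enorm_mul, enorm_pow, enorm_norm, Real.enorm_eq_ofReal (Real.exp_pos _).le]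
  rfl

/-- For `β > 2` and `f` square integrable for the Gaussian measure
`dμ(w) = (1/π)exp(−|w|²)dA(w)`, the Berezin transform satisfies
`(1/π)∫_ℂ |B(f)(z)|²·exp(−β|z|²) dA(z) ≤ (1/(β−2))·‖f‖²_{L²(ℂ,dμ)}`;
in particular `B` is bounded from `L²(ℂ,dμ)` into the weighted Gaussian `L²`
space of parameter `β`. -/
theorem berezin_bounded_into_weighted_L2 (β : ℝ) (hβ : 2 < β)
    (f : ℂ → ℂ) (hf : MemLp f 2 gaussianMeasure) :
    (1 / Real.pi) * ∫ z : ℂ, ‖berezin f z‖ ^ 2 * Real.exp (-β * ‖z‖ ^ 2)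
      ≤ (1 / (β - 2)) * ∫ w : ℂ, ‖f w‖ ^ 2 ∂gaussianMeasure := by
  have hβ0 : 0 < β := by linarith
  have hβ1 : 0 < β - 1 := by linarith
  have hI : 0 ≤ ∫ w, ‖f w‖ ^ 2 ∂gaussianMeasure := integral_nonneg fun _ => by positivity
  -- `u = 2 / β` is an admissible Schur weight, with constant `1 / (β - 1)`.
  have hweight : 1 ≤ 2 / β * (β - 2 / β) := by
    have : 2 / β < 1 := by rw [div_lt_one hβ0]; linarith
    rw [mul_sub, div_mul_cancel₀ _ hβ0.ne']
    nlinarith [div_pos two_pos hβ0]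
  have hconst : (1 + 2 / β) / (1 + (β - 2 / β)) = 1 / (β - 1) := by
    rw [div_eq_div_iff (by nlinarith) hβ1.ne']
    field_simp
    ring
  calc (1 / Real.pi) * ∫ z : ℂ, ‖berezin f z‖ ^ 2 * Real.exp (-β * ‖z‖ ^ 2)
      ≤ (1 / Real.pi) * (1 / (β - 1) * (Real.pi * ∫ w, ‖f w‖ ^ 2 ∂gaussianMeasure)) := by
        rw [← hconst]
        gcongr
        exact integral_norm_berezin_sq_mul_exp_le hf (by positivity) hweight
    _ = 1 / (β - 1) * ∫ w, ‖f w‖ ^ 2 ∂gaussianMeasure := by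
        field_simp
    _ ≤ 1 / (β - 2) * ∫ w, ‖f w‖ ^ 2 ∂gaussianMeasure := by
        gcongr
        linarith
end

section
/- For all integers p, q ≥ 0 and every z ∈ ℂ, (1/π) ∫_ℂ exp(−|z−w|²) · H_{p,q}(w, conj(w)) dA(w) = z^p · conj(z)^q, where H_{p,q} is the complex Hermite polynomial. -/
open Complex ComplexConjugate MeasureTheory

/-- The complex Hermite (Itô) polynomial
`H_{m,n}(z, conj z) = Σ_{k=0}^{min(m,n)} (−1)^k·k!·C(m,k)·C(n,k)·z^{m−k}·conj z^{n−k}`. -/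
noncomputable def complexHermite (m n : ℕ) (z : ℂ) : ℂ :=
  ∑ k ∈ Finset.range (min m n + 1),
    (-1 : ℂ) ^ k * (k.factorial : ℂ) * (m.choose k : ℂ) * (n.choose k : ℂ) *
      z ^ (m - k) * conj z ^ (n - k)

/-!
Write `H_{p,q}(z) = e^{-∂∂̄}(z^p z̄^q)`. After translating `w ↦ w + z` and expanding binomially,
the Berezin transform of a polynomial in `z, z̄` only involves the Gaussian moments
`(1/π) ∫ e^{-|u|²} u^a ū^b = a! δ_{ab}` (off the diagonal they vanish by rotation invariance), and
these moments make it act as `e^{∂∂̄}`. Hence `B(H_{p,q}) = e^{∂∂̄} e^{-∂∂̄}(z^p z̄^q) = z^p z̄^q`;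
on coefficients the cancellation is `∑_{k+i=j} (-1)^k C(j,k) = 0^j`.
-/

open Finset Nat

lemma factorial_mul_choose_mul_factorial_mul_choose (m n k i : ℕ) :
    k ! * m.choose k * n.choose k * (i ! * (m - k).choose i * (n - k).choose i) =
      (k + i).choose k * ((k + i)! * m.choose (k + i) * n.choose (k + i)) := by
  have hm := Nat.choose_mul (n := m) (Nat.le_add_right k i)
  have hn := Nat.choose_mul (n := n) (Nat.le_add_right k i)
  have hf := Nat.choose_mul_factorial_mul_factorial (Nat.le_add_right k i)
  rw [Nat.add_sub_cancel_left] at hm hn hf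
  calc _ = (k ! * i !) * (m.choose k * (m - k).choose i) * (n.choose k * (n - k).choose i) := by
        ring
    _ = _ := by rw [← hm, ← hn, ← hf]; ring

section HeatPoly

variable {R : Type*} [CommRing R]

/-- `heatPoly s m n x y = exp (s ∂ₓ∂ᵧ) (xᵐ yⁿ)`. -/
def heatPoly (s : R) (m n : ℕ) (x y : R) : R :=
  ∑ k ∈ range (min m n + 1), s ^ k * (k ! : R) * (m.choose k : R) * (n.choose k : R) *
    x ^ (m - k) * y ^ (n - k)

/-- The semigroup law `exp (s ∂ₓ∂ᵧ) (exp (t ∂ₓ∂ᵧ) (xᵐ yⁿ)) = exp ((s + t) ∂ₓ∂ᵧ) (xᵐ yⁿ)`. -/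
theorem heatPoly_add (s t : R) (m n : ℕ) (x y : R) :
    ∑ k ∈ range (min m n + 1), s ^ k * (k ! : R) * (m.choose k : R) * (n.choose k : R) *
      heatPoly t (m - k) (n - k) x y = heatPoly (s + t) m n x y := by
  set N := min m n + 1
  set c : ℕ → R := fun j ↦ (j ! : R) * (m.choose j : R) * (n.choose j : R) *
    x ^ (m - j) * y ^ (n - j)
  have hterm : ∀ k i, s ^ k * (k ! : R) * (m.choose k : R) * (n.choose k : R) *
      (t ^ i * (i ! : R) * ((m - k).choose i : R) * ((n - k).choose i : R) *
        x ^ (m - k - i) * y ^ (n - k - i)) =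
        s ^ k * t ^ i * ((k + i).choose k : R) * c (k + i) := by
    intro k i
    have h := congrArg (Nat.cast : ℕ → R) (factorial_mul_choose_mul_factorial_mul_choose m n k i)
    push_cast at h
    simp only [c, Nat.sub_sub]
    linear_combination (s ^ k * t ^ i * x ^ (m - (k + i)) * y ^ (n - (k + i))) * h
  calc _ = ∑ k ∈ range N, ∑ i ∈ range (N - k),
        s ^ k * t ^ i * ((k + i).choose k : R) * c (k + i) := by
        refine sum_congr rfl fun k hk ↦ ?_
        rw [heatPoly, Nat.sub_min_sub_right, mul_sum]
        have : min m n - k + 1 = N - k := by rw [mem_range] at hk; omega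
        rw [this]
        exact sum_congr rfl fun i _ ↦ hterm k i
    _ = ∑ j ∈ range N, (s + t) ^ j * c j := by
        rw [← sum_range_diag_flip]
        refine sum_congr rfl fun j _ ↦ ?_
        rw [add_pow, sum_mul]
        refine sum_congr rfl fun k hk ↦ ?_
        rw [Nat.add_sub_of_le (Nat.lt_succ_iff.mp (mem_range.mp hk))]
    _ = heatPoly (s + t) m n x y := by
        simp only [heatPoly, c]
        exact sum_congr rfl fun j _ ↦ by ring

theorem heatPoly_zero (m n : ℕ) (x y : R) : heatPoly 0 m n x y = x ^ m * y ^ n := by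
  rw [heatPoly, sum_range_succ', sum_eq_zero fun k _ ↦ by simp]
  simp

theorem complexHermite_eq_heatPoly (m n : ℕ) (z : ℂ) :
    complexHermite m n z = heatPoly (-1) m n z (conj z) := rfl

end HeatPoly

lemma integral_norm_pow_mul_exp_neg_norm_sq (n : ℕ) :
    ∫ u : ℂ, ‖u‖ ^ n * Real.exp (-‖u‖ ^ 2) = Real.pi * Real.Gamma (n / 2 + 1) := by
  have h := Complex.integral_rpow_mul_exp_neg_rpow (p := 2) (q := n) (by norm_num)
    (by have := n.cast_nonneg (α := ℝ); linarith)
  simp only [Real.rpow_natCast, Real.rpow_two] at h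
  rw [h, add_div, div_self two_ne_zero]
  ring

lemma integrable_norm_pow_mul_exp_neg_norm_sq (n : ℕ) :
    Integrable (fun u : ℂ ↦ ‖u‖ ^ n * Real.exp (-‖u‖ ^ 2)) := by
  refine Integrable.of_integral_ne_zero ?_
  rw [integral_norm_pow_mul_exp_neg_norm_sq]
  exact (mul_pos Real.pi_pos (Real.Gamma_pos_of_pos (by positivity))).ne'

lemma integrable_cexp_neg_norm_sq_mul_pow_mul_conj_pow (a b : ℕ) :
    Integrable (fun u : ℂ ↦ cexp (-(‖u‖ : ℂ) ^ 2) * u ^ a * conj u ^ b) := by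
  refine (integrable_norm_pow_mul_exp_neg_norm_sq (a + b)).mono' (by fun_prop) ?_
  refine Filter.Eventually.of_forall fun u ↦ le_of_eq ?_
  rw [norm_mul, norm_mul, norm_pow, norm_pow, RCLike.norm_conj, Complex.norm_exp,
    ← ofReal_pow, ← ofReal_neg, ofReal_re, pow_add]
  ring

lemma integral_cexp_neg_norm_sq_mul_pow_mul_conj_pow_eq_mul (a b : ℕ) (ζ : Circle) :
    ∫ u : ℂ, cexp (-(‖u‖ : ℂ) ^ 2) * u ^ a * conj u ^ b =
      ζ ^ a * conj (ζ : ℂ) ^ b * ∫ u : ℂ, cexp (-(‖u‖ : ℂ) ^ 2) * u ^ a * conj u ^ b := by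
  have hrot := ((LinearIsometryEquiv.measurePreserving (rotation ζ)).integral_comp
    (rotation ζ).toHomeomorph.measurableEmbedding
    fun u : ℂ ↦ cexp (-(‖u‖ : ℂ) ^ 2) * u ^ a * conj u ^ b)
  rw [← integral_const_mul, ← hrot]
  refine integral_congr_ae (Filter.Eventually.of_forall fun u ↦ ?_)
  simp only [rotation_apply, norm_mul, Circle.norm_coe, one_mul, map_mul, mul_pow]
  ring

lemma integral_cexp_neg_norm_sq_mul_pow_mul_conj_pow (a b : ℕ) :
    ∫ u : ℂ, cexp (-(‖u‖ : ℂ) ^ 2) * u ^ a * conj u ^ b =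
      if a = b then Real.pi * (a ! : ℂ) else 0 := by
  split_ifs with hab
  · subst hab
    have hdiag : ∀ u : ℂ, cexp (-(‖u‖ : ℂ) ^ 2) * u ^ a * conj u ^ a =
        ((‖u‖ ^ (2 * a) * Real.exp (-‖u‖ ^ 2) : ℝ) : ℂ) := fun u ↦ by
      rw [mul_assoc, ← mul_pow, mul_conj', ← pow_mul, mul_comm]
      push_cast
      ring
    simp_rw [hdiag]
    rw [integral_complex_ofReal (f := fun u : ℂ ↦ ‖u‖ ^ (2 * a) * Real.exp (-‖u‖ ^ 2)),
      integral_norm_pow_mul_exp_neg_norm_sq]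
    push_cast
    rw [mul_div_cancel_left₀ _ two_ne_zero, Real.Gamma_nat_eq_factorial]
    simp
  · have hab' : (a : ℂ) - b ≠ 0 := sub_ne_zero.mpr (by exact_mod_cast hab)
    obtain ⟨θ, hθ⟩ : ∃ θ : ℝ, ((a : ℂ) - b) * θ = Real.pi :=
      ⟨Real.pi / (a - b), by push_cast; exact mul_div_cancel₀ _ hab'⟩
    have hζ : (Circle.exp θ : ℂ) ^ a * conj (Circle.exp θ : ℂ) ^ b = -1 := by
      rw [Circle.coe_exp, ← exp_conj, ← exp_nat_mul, ← exp_nat_mul, ← exp_add]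
      convert exp_pi_mul_I using 2
      simp only [map_mul, conj_ofReal, conj_I]
      linear_combination I * hθ
    have h := integral_cexp_neg_norm_sq_mul_pow_mul_conj_pow_eq_mul a b (Circle.exp θ)
    rw [hζ] at h
    linear_combination h / 2

lemma cexp_neg_norm_sq_mul_add_pow_mul_conj_add_pow (m n : ℕ) (z w : ℂ) :
    cexp (-(‖w‖ : ℂ) ^ 2) * ((w + z) ^ m * conj (w + z) ^ n) =
      ∑ i ∈ range (m + 1), ∑ j ∈ range (n + 1),
        (m.choose i * n.choose j * z ^ (m - i) * conj z ^ (n - j) : ℂ) *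
          (cexp (-(‖w‖ : ℂ) ^ 2) * w ^ i * conj w ^ j) := by
  rw [map_add, add_pow, add_pow, sum_mul_sum, mul_sum]
  refine sum_congr rfl fun i _ ↦ ?_
  rw [mul_sum]
  exact sum_congr rfl fun j _ ↦ by ring

lemma integrable_cexp_neg_norm_sq_mul_add_pow_mul_conj_add_pow (m n : ℕ) (z : ℂ) :
    Integrable (fun w : ℂ ↦ cexp (-(‖w‖ : ℂ) ^ 2) * ((w + z) ^ m * conj (w + z) ^ n)) := by
  simp_rw [cexp_neg_norm_sq_mul_add_pow_mul_conj_add_pow]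
  exact integrable_finsetSum _ fun i _ ↦ integrable_finsetSum _ fun j _ ↦
    (integrable_cexp_neg_norm_sq_mul_pow_mul_conj_pow i j).const_mul _

lemma integral_cexp_neg_norm_sq_mul_add_pow_mul_conj_add_pow (m n : ℕ) (z : ℂ) :
    ∫ w : ℂ, cexp (-(‖w‖ : ℂ) ^ 2) * ((w + z) ^ m * conj (w + z) ^ n) =
      Real.pi * heatPoly 1 m n z (conj z) := by
  simp_rw [cexp_neg_norm_sq_mul_add_pow_mul_conj_add_pow]
  rw [integral_finsetSum _ fun i _ ↦ integrable_finsetSum _ fun j _ ↦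
    (integrable_cexp_neg_norm_sq_mul_pow_mul_conj_pow i j).const_mul _]
  simp_rw [integral_finsetSum _ fun j _ ↦
    (integrable_cexp_neg_norm_sq_mul_pow_mul_conj_pow _ j).const_mul _, integral_const_mul,
    integral_cexp_neg_norm_sq_mul_pow_mul_conj_pow, mul_ite, mul_zero, sum_ite_eq, sum_ite_mem,
    range_inter_range, Nat.succ_min_succ, heatPoly, mul_sum]
  exact sum_congr rfl fun i _ ↦ by ring

lemma integral_cexp_neg_norm_sq_mul_heatPoly_add (s : ℂ) (m n : ℕ) (z : ℂ) :
    ∫ w : ℂ, cexp (-(‖w‖ : ℂ) ^ 2) * heatPoly s m n (w + z) (conj (w + z)) =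
      Real.pi * heatPoly (s + 1) m n z (conj z) := by
  have hexpand : ∀ w : ℂ, cexp (-(‖w‖ : ℂ) ^ 2) * heatPoly s m n (w + z) (conj (w + z)) =
      ∑ k ∈ range (min m n + 1), s ^ k * (k ! : ℂ) * (m.choose k : ℂ) * (n.choose k : ℂ) *
        (cexp (-(‖w‖ : ℂ) ^ 2) * ((w + z) ^ (m - k) * conj (w + z) ^ (n - k))) := fun w ↦ by
    rw [heatPoly, mul_sum]
    exact sum_congr rfl fun k _ ↦ by ring
  simp_rw [hexpand]
  rw [integral_finsetSum _ fun k _ ↦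
    (integrable_cexp_neg_norm_sq_mul_add_pow_mul_conj_add_pow _ _ z).const_mul _,
    ← heatPoly_add, mul_sum]
  simp_rw [integral_const_mul, integral_cexp_neg_norm_sq_mul_add_pow_mul_conj_add_pow]
  exact sum_congr rfl fun k _ ↦ by ring

/-- For all `p, q ≥ 0` and `z ∈ ℂ`,
`(1/π) ∫_ℂ exp(−|z−w|²)·H_{p,q}(w, conj w) dA(w) = z^p · conj z^q`. -/
theorem berezin_complexHermite (p q : ℕ) (z : ℂ) :
    (1 / (Real.pi : ℂ)) *
      ∫ w : ℂ, Complex.exp (-((‖z - w‖ : ℂ) ^ 2)) * complexHermite p q w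
    = z ^ p * conj z ^ q := by
  have htranslate : ∫ w : ℂ, cexp (-((‖z - w‖ : ℂ) ^ 2)) * complexHermite p q w =
      ∫ w : ℂ, cexp (-(‖w‖ : ℂ) ^ 2) * heatPoly (-1) p q (w + z) (conj (w + z)) := by
    rw [← integral_add_right_eq_self _ z]
    simp_rw [sub_add_cancel_right, norm_neg, complexHermite_eq_heatPoly]
  rw [htranslate, integral_cexp_neg_norm_sq_mul_heatPoly_add, neg_add_cancel, heatPoly_zero,
    ← mul_assoc, one_div_mul_cancel (ofReal_ne_zero.mpr Real.pi_ne_zero), one_mul]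
end

section
/- Let f : ℂ → ℂ be square integrable with respect to the Gaussian measure dμ(w) = (1/π) exp(−|w|²) dA(w) and let n ≥ 0 be an integer. Then the Berezin transform B(f) is smooth, and the n-th iterated Wirtinger derivative (∂/∂z)^n B(f) satisfies, for every z ∈ ℂ: (∂/∂z)^n B(f)(z) = Σ_{k=0}^{n} (−1)^k · (n choose k) · conj(z)^k · B(conj(w)^{n−k}·f)(z) = (1/π) ∫_ℂ exp(−|z−w|²) · (conj(w) − conj(z))^n · f(w) dA(w). -/
open Complex ComplexConjugate MeasureTheory

/-- The Wirtinger derivative `∂f/∂z = (1/2)(∂f/∂x − i·∂f/∂y)`, as an operator on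
functions `ℂ → ℂ`. -/
noncomputable def wirtingerDerivOp (f : ℂ → ℂ) : ℂ → ℂ :=
  fun z => (fderiv ℝ f z 1 - Complex.I * fderiv ℝ f z Complex.I) / 2

/-!
`B(f)` is the integral of `f` against the kernel `K(w - z)` with `K(v) = exp(-|v|²)`, and the
whole argument is differentiation under the integral sign. Square integrability of `f` against
`μ` lets `f` grow like `exp(|w|²/2)`, and by Cauchy–Schwarz this is beaten by any kernel decaying
like `exp(-a|v|²)` with `a > 1/2`, uniformly when the centre `z` moves in a unit ball. The kernels
`v^j conj(v)^k exp(-|v|²)` decay in this way, and so do their Wirtinger derivatives, which lie in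
their linear span; hence the integral may be differentiated under the sign any number of times,
and `B(f)` is smooth. Since `∂/∂z` of `(conj w - conj z)^n exp(-|z - w|²)` is
`(conj w - conj z)^(n+1) exp(-|z - w|²)`, induction on `n` gives the integral formula, and the
binomial expansion of `(conj w - conj z)^n` turns it into the finite sum.
-/

/-- The real derivative at a point where the Wirtinger derivatives are `∂ = a` and `∂̄ = b`;
every `ℝ`-linear map `ℂ → ℂ` is of this form. -/
noncomputable def wirtingerCLM (a b : ℂ) : ℂ →L[ℝ] ℂ :=
  a • ContinuousLinearMap.id ℝ ℂ + b • (conjCLE : ℂ →L[ℝ] ℂ)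

@[simp]
theorem wirtingerCLM_apply (a b h : ℂ) : wirtingerCLM a b h = a * h + b * conj h := by
  simp [wirtingerCLM]

theorem norm_wirtingerCLM_le (a b : ℂ) : ‖wirtingerCLM a b‖ ≤ ‖a‖ + ‖b‖ :=
  ContinuousLinearMap.opNorm_le_bound _ (by positivity) fun h => by
    rw [wirtingerCLM_apply, add_mul]
    refine (norm_add_le _ _).trans (le_of_eq ?_)
    rw [norm_mul, norm_mul, Complex.norm_conj]

theorem wirtingerDerivOp_eq_of_hasFDerivAt {g : ℂ → ℂ} {a b z : ℂ}
    (h : HasFDerivAt g (wirtingerCLM a b) z) : wirtingerDerivOp g z = a := by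
  simp only [wirtingerDerivOp, h.fderiv, wirtingerCLM_apply, map_one, conj_I]
  linear_combination ((b - a) / 2) * Complex.I_sq

theorem integrable_mul_norm_of_weighted_sq {α E : Type*} [MeasurableSpace α] {μ : Measure α}
    [NormedAddCommGroup E] {f : α → E} {g ρ : α → ℝ} (hρ : ∀ x, 0 < ρ x)
    (hf : AEStronglyMeasurable f μ) (hg : AEStronglyMeasurable g μ)
    (hf2 : Integrable (fun x => ‖f x‖ ^ 2 * ρ x) μ)
    (hg2 : Integrable (fun x => g x ^ 2 / ρ x) μ) :
    Integrable (fun x => g x * ‖f x‖) μ := by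
  refine (hg2.add hf2).mono' (hg.mul hf.norm) (ae_of_all _ fun x => ?_)
  have hρx := hρ x
  rw [norm_mul, Real.norm_eq_abs, norm_norm, Pi.add_apply, div_add' _ _ _ hρx.ne',
    le_div_iff₀ hρx]
  nlinarith [sq_nonneg (|g x| - ‖f x‖ * ρ x), sq_abs (g x), norm_nonneg (f x), abs_nonneg (g x)]

section GaussianMeasure

variable {E : Type*} [NormedAddCommGroup E] {f : ℂ → E}

theorem aestronglyMeasurable_of_memLp_gaussianMeasure (hf : MemLp f 2 gaussianMeasure) :
    AEStronglyMeasurable f volume :=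
  hf.1.mono_ac <| withDensity_absolutelyContinuous' (by fun_prop) <|
    ae_of_all _ fun w => by positivity

theorem integrable_norm_sq_mul_exp_of_memLp_gaussianMeasure (hf : MemLp f 2 gaussianMeasure) :
    Integrable (fun w => ‖f w‖ ^ 2 * Real.exp (-‖w‖ ^ 2)) volume := by
  have h := hf.integrable_norm_rpow two_ne_zero ENNReal.ofNat_ne_top
  rw [gaussianMeasure, integrable_withDensity_iff (by fun_prop)
    (ae_of_all _ fun w => ENNReal.ofReal_lt_top)] at h
  refine (h.const_mul Real.pi).congr (ae_of_all _ fun w => ?_)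
  simp only [ENNReal.toReal_ofReal (by positivity : 0 ≤ Real.exp (-‖w‖ ^ 2) / Real.pi),
    ENNReal.toReal_ofNat, Real.rpow_two]
  field_simp

theorem integrable_exp_norm_sq_sub_norm_sub_sq (z : ℂ) :
    Integrable (fun w : ℂ => Real.exp (‖w‖ ^ 2 - 5 / 4 * ‖w - z‖ ^ 2)) volume := by
  have h := (GaussianFourier.integrable_cexp_neg_mul_sq_norm_add (V := ℂ) (b := 1 / 4)
    (by norm_num) (5 / 2) z).norm.const_mul (Real.exp (-(5 / 4) * ‖z‖ ^ 2))
  refine h.congr (ae_of_all _ fun w => ?_)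
  dsimp only
  rw [show -(1 / 4 : ℂ) * ‖w‖ ^ 2 + 5 / 2 * inner ℝ z w
      = ((-(1 / 4) * ‖w‖ ^ 2 + 5 / 2 * inner ℝ z w : ℝ) : ℂ) by push_cast; ring,
    Complex.norm_exp_ofReal, ← Real.exp_add, norm_sub_sq_real, real_inner_comm]
  ring_nf

theorem integrable_exp_mul_norm_of_memLp_gaussianMeasure (hf : MemLp f 2 gaussianMeasure)
    (z : ℂ) : Integrable (fun w => Real.exp (-(5 / 8) * ‖w - z‖ ^ 2) * ‖f w‖) volume := by
  refine integrable_mul_norm_of_weighted_sq (fun w => Real.exp_pos _)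
    (aestronglyMeasurable_of_memLp_gaussianMeasure hf) (by fun_prop)
    (integrable_norm_sq_mul_exp_of_memLp_gaussianMeasure hf) ?_
  refine (integrable_exp_norm_sq_sub_norm_sub_sq z).congr (ae_of_all _ fun w => ?_)
  dsimp only
  rw [← Real.exp_nat_mul, ← Real.exp_sub]
  ring_nf

end GaussianMeasure

/-- Any rate above `1/2` would do: at or below it, `exp(-a|w - z|²)` is not square integrable
against `exp(|w|²)`, the weight dual to `L²(gaussianMeasure)`. The margin above `1/2` is spent
on moving the centre (`HasGaussianDecay.exists_bound_translate`). -/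
def HasGaussianDecay {E : Type*} [Norm E] (K : ℂ → E) : Prop :=
  K =O[⊤] fun v => Real.exp (-(3 / 4) * ‖v‖ ^ 2)

section GaussianDecay

variable {E : Type*} [NormedAddCommGroup E] {K : ℂ → E}

theorem hasGaussianDecay_of_norm_le {c : ℝ} (hc : 0 ≤ c) (m : ℕ)
    (hK : ∀ v, ‖K v‖ ≤ (‖v‖ + c) ^ m * Real.exp (-‖v‖ ^ 2)) : HasGaussianDecay K := by
  refine Asymptotics.isBigO_top.2 ⟨Real.exp (m * c + m ^ 2), fun v => (hK v).trans ?_⟩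
  have hpow : (‖v‖ + c) ^ m ≤ Real.exp (m * (‖v‖ + c)) := by
    rw [Real.exp_nat_mul]
    exact pow_le_pow_left₀ (by positivity) (by linarith [Real.add_one_le_exp (‖v‖ + c)]) m
  rw [Real.norm_of_nonneg (Real.exp_pos _).le]
  calc (‖v‖ + c) ^ m * Real.exp (-‖v‖ ^ 2)
      ≤ Real.exp (m * (‖v‖ + c)) * Real.exp (-‖v‖ ^ 2) := by gcongr
    _ ≤ Real.exp (m * c + m ^ 2) * Real.exp (-(3 / 4) * ‖v‖ ^ 2) := by
      rw [← Real.exp_add, ← Real.exp_add, Real.exp_le_exp]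
      nlinarith [sq_nonneg (‖v‖ - 2 * m)]

theorem HasGaussianDecay.exists_bound_translate (hK : HasGaussianDecay K) :
    ∃ C, ∀ x z w : ℂ, ‖x - z‖ ≤ 1 → ‖K (w - x)‖ ≤ C * Real.exp (-(5 / 8) * ‖w - z‖ ^ 2) := by
  obtain ⟨C, hC0, hC⟩ := hK.exists_nonneg
  refine ⟨C * Real.exp (15 / 4), fun x z w hxz => ?_⟩
  refine (Asymptotics.isBigOWith_top.1 hC (w - x)).trans ?_
  rw [Real.norm_of_nonneg (Real.exp_pos _).le, mul_assoc, ← Real.exp_add]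
  gcongr
  have := norm_sub_le_norm_sub_add_norm_sub w x z
  nlinarith [sq_nonneg (‖w - x‖ - 5), norm_nonneg (w - z), norm_nonneg (w - x)]

end GaussianDecay

noncomputable def kernelTransform (K f : ℂ → ℂ) (z : ℂ) : ℂ :=
  ∫ w, f w * K (w - z)

section KernelTransform

variable {f : ℂ → ℂ}

theorem integrable_mul_kernel {K : ℂ → ℂ} (hK : Continuous K) (hKd : HasGaussianDecay K)
    (hf : MemLp f 2 gaussianMeasure) (z : ℂ) :
    Integrable (fun w => f w * K (w - z)) volume := by
  obtain ⟨C, hC⟩ := hKd.exists_bound_translate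
  refine ((integrable_exp_mul_norm_of_memLp_gaussianMeasure hf z).const_mul C).mono'
    ((aestronglyMeasurable_of_memLp_gaussianMeasure hf).mul (by fun_prop))
    (ae_of_all _ fun w => ?_)
  rw [norm_mul, mul_comm, ← mul_assoc]
  exact mul_le_mul_of_nonneg_right (hC z z w (by simp)) (norm_nonneg _)

theorem hasFDerivAt_kernelTransform {K a b : ℂ → ℂ}
    (hK : ∀ v, HasFDerivAt K (wirtingerCLM (a v) (b v)) v) (ha : Continuous a)
    (hb : Continuous b) (hKd : HasGaussianDecay K) (had : HasGaussianDecay a)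
    (hbd : HasGaussianDecay b) (hf : MemLp f 2 gaussianMeasure) (z : ℂ) :
    HasFDerivAt (kernelTransform K f)
      (wirtingerCLM (-kernelTransform a f z) (-kernelTransform b f z)) z := by
  have hK'd : HasGaussianDecay fun v => wirtingerCLM (a v) (b v) :=
    (Asymptotics.isBigO_of_le _ fun v => (norm_wirtingerCLM_le _ _).trans (le_abs_self _)).trans
      (had.norm_left.add hbd.norm_left)
  obtain ⟨C, hC⟩ := hK'd.exists_bound_translate
  have hKc : Continuous K := continuous_iff_continuousAt.2 fun v => (hK v).continuousAt
  have key := hasFDerivAt_integral_of_dominated_of_fderiv_le (μ := volume)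
    (F := fun x w => f w * K (w - x))
    (F' := fun x w => -(f w • wirtingerCLM (a (w - x)) (b (w - x))))
    (bound := fun w => C * (Real.exp (-(5 / 8) * ‖w - z‖ ^ 2) * ‖f w‖))
    (Metric.ball_mem_nhds z one_pos)
    (Filter.Eventually.of_forall fun x => (integrable_mul_kernel hKc hKd hf x).1)
    (integrable_mul_kernel hKc hKd hf z)
    ((aestronglyMeasurable_of_memLp_gaussianMeasure hf).smul
      (by unfold wirtingerCLM; fun_prop)).neg
    (ae_of_all _ fun w x hx => by
      rw [norm_neg, norm_smul, mul_comm, ← mul_assoc]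
      exact mul_le_mul_of_nonneg_right (hC x z w (mem_ball_iff_norm.1 hx).le) (norm_nonneg _))
    ((integrable_exp_mul_norm_of_memLp_gaussianMeasure hf z).const_mul C)
    (ae_of_all _ fun w x _ =>
      (((hK (w - x)).comp x ((hasFDerivAt_id x).const_sub w)).const_mul (f w)).congr_fderiv
        (ContinuousLinearMap.ext fun h => by simp))
  refine key.congr_fderiv ?_
  simp only [integral_neg, wirtingerCLM, smul_add, smul_smul]
  rw [integral_add ((integrable_mul_kernel ha had hf z).smul_const _)
      ((integrable_mul_kernel hb hbd hf z).smul_const _), integral_smul_const,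
    integral_smul_const]
  exact ContinuousLinearMap.ext fun v => by simp [kernelTransform, add_comm]

end KernelTransform

def IsGaussianKernelClass (S : Set (ℂ → ℂ)) : Prop :=
  ∀ K ∈ S, HasGaussianDecay K ∧ ∃ a ∈ S, ∃ b ∈ S, ∀ v, HasFDerivAt K (wirtingerCLM (a v) (b v)) v

namespace IsGaussianKernelClass

variable {S : Set (ℂ → ℂ)} {K a b f : ℂ → ℂ}

theorem continuous (hS : IsGaussianKernelClass S) (hK : K ∈ S) : Continuous K := by
  obtain ⟨-, _, -, _, -, hd⟩ := hS K hK
  exact continuous_iff_continuousAt.2 fun v => (hd v).continuousAt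

theorem hasFDerivAt_kernelTransform (hS : IsGaussianKernelClass S) (hK : K ∈ S) (ha : a ∈ S)
    (hb : b ∈ S) (hd : ∀ v, HasFDerivAt K (wirtingerCLM (a v) (b v)) v)
    (hf : MemLp f 2 gaussianMeasure) (z : ℂ) :
    HasFDerivAt (kernelTransform K f)
      (wirtingerCLM (-kernelTransform a f z) (-kernelTransform b f z)) z :=
  _root_.hasFDerivAt_kernelTransform hd (hS.continuous ha) (hS.continuous hb) (hS K hK).1
    (hS a ha).1 (hS b hb).1 hf z

theorem contDiff_kernelTransform (hS : IsGaussianKernelClass S) (hf : MemLp f 2 gaussianMeasure)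
    (m : ℕ) : ∀ K ∈ S, ContDiff ℝ m (kernelTransform K f) := by
  induction m with
  | zero =>
    intro K hK
    obtain ⟨-, a, ha, b, hb, hd⟩ := hS K hK
    rw [Nat.cast_zero, contDiff_zero]
    exact continuous_iff_continuousAt.2 fun z =>
      (hS.hasFDerivAt_kernelTransform hK ha hb hd hf z).continuousAt
  | succ m ih =>
    intro K hK
    obtain ⟨-, a, ha, b, hb, hd⟩ := hS K hK
    rw [Nat.cast_succ, contDiff_succ_iff_hasFDerivAt]
    refine ⟨_, ?_, hS.hasFDerivAt_kernelTransform hK ha hb hd hf⟩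
    unfold wirtingerCLM
    exact ((ih a ha).neg.smul contDiff_const).add ((ih b hb).neg.smul contDiff_const)

end IsGaussianKernelClass

noncomputable def gaussianMonomial (j k : ℕ) (v : ℂ) : ℂ :=
  Complex.exp (-(‖v‖ : ℂ) ^ 2) * v ^ j * conj v ^ k

theorem norm_cexp_neg_norm_sq (v : ℂ) :
    ‖Complex.exp (-(‖v‖ : ℂ) ^ 2)‖ = Real.exp (-‖v‖ ^ 2) := by
  rw [← Complex.ofReal_pow, ← Complex.ofReal_neg, Complex.norm_exp_ofReal]

theorem hasGaussianDecay_gaussianMonomial (j k : ℕ) : HasGaussianDecay (gaussianMonomial j k) :=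
  hasGaussianDecay_of_norm_le le_rfl (j + k) fun v => le_of_eq <| by
    simp only [gaussianMonomial, norm_mul, norm_pow, norm_cexp_neg_norm_sq, Complex.norm_conj,
      add_zero, pow_add]
    ring

/-- The truncated `j - 1` and `k - 1` are harmless: at `0` their coefficient vanishes. -/
theorem hasFDerivAt_gaussianMonomial (j k : ℕ) (v : ℂ) :
    HasFDerivAt (gaussianMonomial j k)
      (wirtingerCLM (((j : ℂ) • gaussianMonomial (j - 1) k - gaussianMonomial j (k + 1)) v)
        (((k : ℂ) • gaussianMonomial j (k - 1) - gaussianMonomial (j + 1) k) v)) v := by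
  have hK : gaussianMonomial j k = fun x => Complex.exp (-(x * conj x)) * x ^ j * conj x ^ k := by
    funext x
    rw [gaussianMonomial, Complex.mul_conj']
  have hid := hasFDerivAt_id (𝕜 := ℝ) v
  have hconj : HasFDerivAt (fun x : ℂ => conj x) (conjCLE : ℂ →L[ℝ] ℂ) v :=
    (conjCLE : ℂ →L[ℝ] ℂ).hasFDerivAt
  rw [hK]
  refine ((((hid.mul hconj).neg.cexp).mul (hid.pow j)).mul (hconj.pow k)).congr_fderiv
    (ContinuousLinearMap.ext fun h => ?_)
  simp only [wirtingerCLM_apply, Pi.sub_apply, Pi.smul_apply, Pi.mul_apply, Pi.neg_apply,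
    smul_eq_mul, gaussianMonomial, ← mul_conj', add_apply, smul_apply, neg_apply,
    ContinuousLinearMap.id_apply, ContinuousLinearEquiv.coe_coe, conjCLE_apply, id_eq, nsmul_eq_mul]
  ring

noncomputable def gaussianKernels : Submodule ℂ (ℂ → ℂ) :=
  Submodule.span ℂ (Set.range fun p : ℕ × ℕ => gaussianMonomial p.1 p.2)

theorem gaussianMonomial_mem_gaussianKernels (j k : ℕ) :
    gaussianMonomial j k ∈ gaussianKernels :=
  Submodule.subset_span ⟨(j, k), rfl⟩

theorem isGaussianKernelClass_gaussianKernels :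
    IsGaussianKernelClass (gaussianKernels : Set (ℂ → ℂ)) := by
  intro K hK
  induction hK using Submodule.span_induction with
  | mem K hK =>
    obtain ⟨⟨j, k⟩, rfl⟩ := hK
    have hmem := gaussianMonomial_mem_gaussianKernels
    exact ⟨hasGaussianDecay_gaussianMonomial j k, _,
      gaussianKernels.sub_mem (gaussianKernels.smul_mem _ (hmem _ _)) (hmem _ _), _,
      gaussianKernels.sub_mem (gaussianKernels.smul_mem _ (hmem _ _)) (hmem _ _),
      hasFDerivAt_gaussianMonomial j k⟩
  | zero =>
    exact ⟨Asymptotics.isBigO_zero _ _, 0, gaussianKernels.zero_mem, 0, gaussianKernels.zero_mem,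
      fun v => (hasFDerivAt_const (0 : ℂ) v).congr_fderiv
        (ContinuousLinearMap.ext fun h => by simp)⟩
  | add K₁ K₂ _ _ h₁ h₂ =>
    obtain ⟨hd₁, a₁, ha₁, b₁, hb₁, hK₁⟩ := h₁
    obtain ⟨hd₂, a₂, ha₂, b₂, hb₂, hK₂⟩ := h₂
    refine ⟨hd₁.add hd₂, a₁ + a₂, gaussianKernels.add_mem ha₁ ha₂, b₁ + b₂,
      gaussianKernels.add_mem hb₁ hb₂, fun v => ((hK₁ v).add (hK₂ v)).congr_fderiv
        (ContinuousLinearMap.ext fun h => ?_)⟩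
    simp only [add_apply, wirtingerCLM_apply, Pi.add_apply]
    ring
  | smul c K _ h =>
    obtain ⟨hd, a, ha, b, hb, hK⟩ := h
    refine ⟨hd.const_smul_left c, c • a, gaussianKernels.smul_mem c ha, c • b,
      gaussianKernels.smul_mem c hb, fun v => ((hK v).const_smul c).congr_fderiv
        (ContinuousLinearMap.ext fun h => ?_)⟩
    simp only [smul_apply, wirtingerCLM_apply, Pi.smul_apply, smul_eq_mul]
    ring

section Berezin

variable {f : ℂ → ℂ}

theorem wirtingerDerivOp_kernelTransform_gaussianMonomial (hf : MemLp f 2 gaussianMeasure)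
    (n : ℕ) (z : ℂ) :
    wirtingerDerivOp (kernelTransform (gaussianMonomial 0 n) f) z
      = kernelTransform (gaussianMonomial 0 (n + 1)) f z := by
  have hmem := gaussianMonomial_mem_gaussianKernels
  have hsub (c : ℂ) (j k j' k' : ℕ) : c • gaussianMonomial j k - gaussianMonomial j' k'
      ∈ gaussianKernels :=
    gaussianKernels.sub_mem (gaussianKernels.smul_mem c (hmem j k)) (hmem j' k')
  rw [wirtingerDerivOp_eq_of_hasFDerivAt
    (isGaussianKernelClass_gaussianKernels.hasFDerivAt_kernelTransform (hmem 0 n) (hsub _ _ _ _ _)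
      (hsub _ _ _ _ _) (hasFDerivAt_gaussianMonomial 0 n) hf z)]
  simp [kernelTransform, integral_neg]

theorem kernelTransform_gaussianMonomial_zero (g : ℂ → ℂ) (n : ℕ) (z : ℂ) :
    kernelTransform (gaussianMonomial 0 n) (fun w => 1 / (Real.pi : ℂ) * g w) z
      = berezin (fun w => (conj w - conj z) ^ n * g w) z := by
  rw [kernelTransform, berezin, ← integral_const_mul]
  refine integral_congr_ae (ae_of_all _ fun w => ?_)
  simp only [gaussianMonomial, norm_sub_rev w z, map_sub]
  ring

theorem integrable_cexp_mul_conj_pow_mul (hf : MemLp f 2 gaussianMeasure) (m : ℕ) (z : ℂ) :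
    Integrable (fun w => Complex.exp (-((‖z - w‖ : ℂ) ^ 2)) * (conj w ^ m * f w)) volume := by
  have hK : HasGaussianDecay fun v => Complex.exp (-(‖v‖ : ℂ) ^ 2) * conj (v + z) ^ m :=
    hasGaussianDecay_of_norm_le (norm_nonneg z) m fun v => by
      rw [norm_mul, norm_cexp_neg_norm_sq, norm_pow, Complex.norm_conj, mul_comm]
      gcongr
      exact norm_add_le v z
  refine (integrable_mul_kernel (by fun_prop) hK hf z).congr (ae_of_all _ fun w => ?_)
  simp only [sub_add_cancel, norm_sub_rev w z]
  ring

theorem berezin_conj_sub_pow_mul (hf : MemLp f 2 gaussianMeasure) (n : ℕ) (z : ℂ) :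
    berezin (fun w => (conj w - conj z) ^ n * f w) z
      = ∑ k ∈ Finset.range (n + 1), (-1 : ℂ) ^ k * (n.choose k : ℂ) * conj z ^ k *
          berezin (fun w => conj w ^ (n - k) * f w) z := by
  have hexpand : ∀ w, Complex.exp (-((‖z - w‖ : ℂ) ^ 2)) * ((conj w - conj z) ^ n * f w)
      = ∑ k ∈ Finset.range (n + 1), (-1 : ℂ) ^ k * (n.choose k : ℂ) * conj z ^ k *
          (Complex.exp (-((‖z - w‖ : ℂ) ^ 2)) * (conj w ^ (n - k) * f w)) := fun w => by
    rw [show conj w - conj z = -conj z + conj w by ring, add_pow, Finset.sum_mul, Finset.mul_sum]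
    refine Finset.sum_congr rfl fun k _ => ?_
    rw [neg_pow]
    ring
  simp only [berezin, hexpand]
  rw [integral_finsetSum _ fun k _ => (integrable_cexp_mul_conj_pow_mul hf (n - k) z).const_mul _,
    Finset.mul_sum]
  refine Finset.sum_congr rfl fun k _ => ?_
  rw [integral_const_mul]
  ring

end Berezin

/-- If `f : ℂ → ℂ` is square integrable for the Gaussian measure and `n ≥ 0`, then
`B(f)` is smooth and its `n`-th iterated Wirtinger derivative satisfies
`(∂/∂z)^n B(f)(z) = Σ_{k=0}^n (−1)^k·C(n,k)·conj z^k·B(conj w^{n−k}·f)(z)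
  = (1/π)∫_ℂ exp(−|z−w|²)·(conj w − conj z)^n·f(w) dA(w)`. -/
theorem iterated_wirtingerDeriv_berezin (f : ℂ → ℂ)
    (hf : MemLp f 2 gaussianMeasure) (n : ℕ) :
    (∀ m : ℕ, ContDiff ℝ m (berezin f)) ∧
    (∀ z : ℂ,
      (wirtingerDerivOp^[n] (berezin f)) z
        = ∑ k ∈ Finset.range (n + 1),
            (-1 : ℂ) ^ k * (n.choose k : ℂ) * conj z ^ k *
              berezin (fun w => conj w ^ (n - k) * f w) z ∧
      (wirtingerDerivOp^[n] (berezin f)) z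
        = (1 / (Real.pi : ℂ)) *
            ∫ w : ℂ,
              Complex.exp (-((‖z - w‖ : ℂ) ^ 2)) * (conj w - conj z) ^ n * f w) := by
  set g : ℂ → ℂ := fun w => 1 / (Real.pi : ℂ) * f w
  have hg : MemLp g 2 gaussianMeasure := hf.const_mul _
  have hB : berezin f = kernelTransform (gaussianMonomial 0 0) g := funext fun z => by
    simpa only [pow_zero, one_mul] using (kernelTransform_gaussianMonomial_zero f 0 z).symm
  have hiter : wirtingerDerivOp^[n] (berezin f) = kernelTransform (gaussianMonomial 0 n) g := by
    induction n with
    | zero => exact hB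
    | succ n ih =>
      rw [Function.iterate_succ_apply', ih]
      exact funext (wirtingerDerivOp_kernelTransform_gaussianMonomial hg n)
  refine ⟨fun m => hB ▸ isGaussianKernelClass_gaussianKernels.contDiff_kernelTransform hg m _
    (gaussianMonomial_mem_gaussianKernels 0 0), fun z => ?_⟩
  rw [hiter, kernelTransform_gaussianMonomial_zero, ← berezin_conj_sub_pow_mul hf]
  exact ⟨rfl, by simp only [berezin, mul_assoc]⟩
end

section
/- Let a : ℕ × ℕ → ℂ satisfy Σ_{m,n} m!·n!·|a_{m,n}|² < ∞. Then Σ_{m,n} m!·n!·|a_{m+1,n}|² ≤ Σ_{m,n} m!·n!·|a_{m,n}|² − Σ_{n} n!·|a_{0,n}|². In particular the backward shift R_∞ is a contraction on the polyanalytic Fock space of infinite order. -/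
open Complex

/-- Let `a : ℕ × ℕ → ℂ` satisfy `Σ_{m,n} m!·n!·|a_{m,n}|² < ∞`. Then the shifted
family is summable and
`Σ_{m,n} m!·n!·|a_{m+1,n}|² ≤ Σ_{m,n} m!·n!·|a_{m,n}|² − Σ_n n!·|a_{0,n}|²`:
the backward shift `R_∞` is a contraction on the polyanalytic Fock space of
infinite order. -/
theorem backward_shift_contraction_fock (a : ℕ × ℕ → ℂ)
    (ha : Summable fun p : ℕ × ℕ =>
      ((p.1.factorial : ℝ) * (p.2.factorial : ℝ)) * ‖a p‖ ^ 2) :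
    Summable (fun p : ℕ × ℕ =>
      ((p.1.factorial : ℝ) * (p.2.factorial : ℝ)) * ‖a (p.1 + 1, p.2)‖ ^ 2) ∧
    ∑' p : ℕ × ℕ, ((p.1.factorial : ℝ) * (p.2.factorial : ℝ)) * ‖a (p.1 + 1, p.2)‖ ^ 2
      ≤ (∑' p : ℕ × ℕ, ((p.1.factorial : ℝ) * (p.2.factorial : ℝ)) * ‖a p‖ ^ 2)
          - ∑' n : ℕ, (n.factorial : ℝ) * ‖a (0, n)‖ ^ 2 := by
  set g : ℕ × ℕ → ℝ := fun p => ((p.1.factorial : ℝ) * (p.2.factorial : ℝ)) * ‖a p‖ ^ 2 with hg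
  have hg0 : ∀ p, 0 ≤ g p := fun p => by positivity
  set ι : ℕ × ℕ → ℕ × ℕ := fun p => (p.1 + 1, p.2) with hι
  have hinj : Function.Injective ι := by
    intro p q h
    simp only [hι, Prod.ext_iff] at h ⊢
    omega
  have hsum_comp : Summable (g ∘ ι) := ha.comp_injective hinj
  have hle : ∀ p : ℕ × ℕ,
      ((p.1.factorial : ℝ) * (p.2.factorial : ℝ)) * ‖a (p.1 + 1, p.2)‖ ^ 2 ≤ g (ι p) := by
    intro p
    have h1 : (p.1.factorial : ℝ) ≤ ((p.1 + 1).factorial : ℝ) := by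
      exact_mod_cast Nat.factorial_le (Nat.le_succ _)
    have h2 : (0:ℝ) ≤ (p.2.factorial : ℝ) * ‖a (p.1 + 1, p.2)‖ ^ 2 := by positivity
    simp only [hg, hι]
    calc (p.1.factorial : ℝ) * (p.2.factorial : ℝ) * ‖a (p.1 + 1, p.2)‖ ^ 2
        = (p.1.factorial : ℝ) * ((p.2.factorial : ℝ) * ‖a (p.1 + 1, p.2)‖ ^ 2) := by ring
      _ ≤ ((p.1 + 1).factorial : ℝ) * ((p.2.factorial : ℝ) * ‖a (p.1 + 1, p.2)‖ ^ 2) :=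
          mul_le_mul_of_nonneg_right h1 h2
      _ = _ := by ring
  have hnn : ∀ p : ℕ × ℕ,
      0 ≤ ((p.1.factorial : ℝ) * (p.2.factorial : ℝ)) * ‖a (p.1 + 1, p.2)‖ ^ 2 := by
    intro p; positivity
  have hsum : Summable (fun p : ℕ × ℕ =>
      ((p.1.factorial : ℝ) * (p.2.factorial : ℝ)) * ‖a (p.1 + 1, p.2)‖ ^ 2) :=
    Summable.of_nonneg_of_le hnn hle hsum_comp
  refine ⟨hsum, ?_⟩
  -- equality over the range
  have hrange : ∑' x : Set.range ι, g x = ∑' p, g (ι p) := tsum_range g hinj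
  -- complement of range is {0} × ℕ
  have hcompl : (Set.range ι)ᶜ = Set.range (fun n : ℕ => ((0, n) : ℕ × ℕ)) := by
    ext ⟨m, n⟩
    simp only [Set.mem_compl_iff, Set.mem_range, hι, Prod.ext_iff, not_exists]
    constructor
    · intro h
      rcases m with _ | m
      · exact ⟨n, rfl, rfl⟩
      · exact absurd ⟨rfl, rfl⟩ (h (m, n))
    · rintro ⟨k, hk1, hk2⟩ ⟨i, j⟩ ⟨h1, h2⟩
      omega
  have hinj0 : Function.Injective (fun n : ℕ => ((0, n) : ℕ × ℕ)) := by
    intro x y h; simpa [Prod.ext_iff] using h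
  have hcompl_sum : ∑' x : ((Set.range ι)ᶜ : Set (ℕ × ℕ)), g x
      = ∑' n : ℕ, (n.factorial : ℝ) * ‖a (0, n)‖ ^ 2 := by
    rw [hcompl, tsum_range g hinj0]
    simp [hg]
  have hsplit : ∑' x : Set.range ι, g x + ∑' x : ((Set.range ι)ᶜ : Set (ℕ × ℕ)), g x
      = ∑' p, g p :=
    Summable.tsum_add_tsum_compl (ha.subtype _) (ha.subtype _)
  have : ∑' p, g (ι p) = (∑' p, g p) - ∑' n : ℕ, (n.factorial : ℝ) * ‖a (0, n)‖ ^ 2 := by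
    rw [← hrange, ← hcompl_sum]; linarith [hsplit]
  calc ∑' p : ℕ × ℕ, ((p.1.factorial : ℝ) * (p.2.factorial : ℝ)) * ‖a (p.1 + 1, p.2)‖ ^ 2
      ≤ ∑' p, g (ι p) := Summable.tsum_le_tsum hle hsum hsum_comp
    _ = _ := this
end

section
/- For every positive integer N, all points z_1, …, z_N ∈ ℂ with |z_i| < 1/√2 for each i, and all scalars c_1, …, c_N ∈ ℂ, the sum Σ_{i,j=1}^{N} c_i · conj(c_j) / (1 − 2·Re(z_i·conj(z_j))) is a nonnegative real number; that is, the kernel k(z,w) = 1/(1 − z·conj(w) − conj(z)·w) is positive definite on the open disk |z| < 1/√2. (Note that 1 − 2·Re(z_i·conj(z_j)) > 0 for such points.) -/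
/-!
The matrix `W = z z* + z̄ z̄*` is positive semidefinite, its entries are `2 Re(z_i conj z_j)`, and
on the disk `|z| < 1/√2` they have modulus `< 1`. The kernel matrix `(1 - W_ij)⁻¹` is the entrywise
geometric series `∑ₖ W^{∘k}`, and every Hadamard power `W^{∘k}` is positive semidefinite by the
Schur product theorem.
-/

open Complex ComplexConjugate Matrix
open scoped ComplexOrder

namespace Matrix

variable {𝕜 n : Type*} [RCLike 𝕜]

theorem PosSemidef.map_pow [Finite n] {A : Matrix n n 𝕜} (hA : A.PosSemidef) (k : ℕ) :
    (A.map (· ^ k)).PosSemidef := by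
  induction k with
  | zero =>
    convert posSemidef_vecMulVec_self_star (1 : n → 𝕜) using 1
    ext i j
    simp
  | succ k ih =>
    convert ih.hadamard hA using 1
    ext i j
    simp [pow_succ]

theorem PosSemidef.map_inv_one_sub [Fintype n] {A : Matrix n n 𝕜} (hA : A.PosSemidef)
    (hA_lt : ∀ i j, ‖A i j‖ < 1) : (A.map fun a ↦ (1 - a)⁻¹).PosSemidef := by
  refine .of_dotProduct_mulVec_nonneg (hA.isHermitian.map _ fun a ↦ by simp) fun x ↦ ?_
  have hgeom : HasSum (fun k ↦ star x ⬝ᵥ (A.map (· ^ k) *ᵥ x))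
      (star x ⬝ᵥ (A.map (fun a ↦ (1 - a)⁻¹) *ᵥ x)) := by
    simp only [dotProduct, mulVec, map_apply, Finset.mul_sum]
    refine hasSum_sum fun i _ ↦ hasSum_sum fun j _ ↦ ?_
    exact ((hasSum_geometric_of_norm_lt_one (hA_lt i j)).mul_right (x j)).mul_left (star x i)
  exact hgeom.nonneg fun k ↦ (hA.map_pow k).dotProduct_mulVec_nonneg x

end Matrix

theorem abs_two_mul_re_mul_conj_lt_one {a b : ℂ} (ha : ‖a‖ < 1 / Real.sqrt 2)
    (hb : ‖b‖ < 1 / Real.sqrt 2) : |2 * (a * conj b).re| < 1 := by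
  have hab : ‖a‖ * ‖b‖ < 1 / 2 := by
    calc ‖a‖ * ‖b‖ < (1 / Real.sqrt 2) * (1 / Real.sqrt 2) :=
          mul_lt_mul'' ha hb (norm_nonneg a) (norm_nonneg b)
      _ = 1 / 2 := by field_simp; norm_num
  calc |2 * (a * conj b).re| = 2 * |(a * conj b).re| := by rw [abs_mul, abs_two]
    _ ≤ 2 * (‖a‖ * ‖b‖) := by
        gcongr
        simpa using abs_re_le_norm (a * conj b)
    _ < 1 := by linarith

theorem drury_arveson_kernel_posdef_general (N : ℕ)
    (z : Fin N → ℂ) (hz : ∀ i, ‖z i‖ < 1 / Real.sqrt 2) (c : Fin N → ℂ) :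
    0 ≤ ∑ i, ∑ j, c i * conj (c j) /
      ((1 - 2 * (z i * conj (z j)).re : ℝ) : ℂ) := by
  set W : Matrix (Fin N) (Fin N) ℂ := vecMulVec z (star z) + vecMulVec (star z) z
  have hW : W.PosSemidef :=
    (posSemidef_vecMulVec_self_star z).add (posSemidef_vecMulVec_star_self z)
  have hW_apply (i j : Fin N) : W i j = ((2 * (z i * conj (z j)).re : ℝ) : ℂ) := by
    rw [← add_conj]
    simp [W, vecMulVec_apply, mul_comm]
  have hW_lt (i j : Fin N) : ‖W i j‖ < 1 := by
    rw [hW_apply, norm_real, Real.norm_eq_abs]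
    exact abs_two_mul_re_mul_conj_lt_one (hz i) (hz j)
  convert (hW.map_inv_one_sub hW_lt).dotProduct_mulVec_nonneg (star c) using 1
  simp [dotProduct, mulVec, Finset.mul_sum, hW_apply, div_eq_mul_inv, mul_comm, mul_left_comm]

/-- The Drury–Arveson-type kernel `k(z,w) = 1/(1 − 2·Re(z·conj w))` is positive
semi-definite on the open disk `|z| < 1/√2`: for every positive integer `N`,
points `z : Fin N → ℂ` with `‖z i‖ < 1/√2`, and scalars `c : Fin N → ℂ`, the sum
`Σ_{i,j} c i · conj (c j) / (1 − 2·Re(z i · conj (z j)))` is a nonnegative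
(real) number. -/
theorem drury_arveson_kernel_posdef (N : ℕ) (hN : 0 < N)
    (z : Fin N → ℂ) (hz : ∀ i, ‖z i‖ < 1 / Real.sqrt 2) (c : Fin N → ℂ) :
    0 ≤ ∑ i, ∑ j, c i * conj (c j) /
      ((1 - 2 * (z i * conj (z j)).re : ℝ) : ℂ) :=
  drury_arveson_kernel_posdef_general N z hz c
end
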